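/- For every j with 1 ≤ j ≤ a₁ − 1, one has η_j = ⌊ω_j/a₁⌋ − ⌊ω_{j−1}/a₁⌋. -/

import Mathlib

/-!
Since `S + a₁ ⊆ S`, the elements of `S` congruent to an Apéry element `w` modulo `a₁` are exactly
`w, w + a₁, w + 2a₁, …`. Hence `I_k ∩ S` has one element for each `w ∈ Ap(S)` with `⌊w/a₁⌋ ≤ k`,
i.e. `|I_k ∩ S| = #{i < a₁ | ⌊ω_i/a₁⌋ ≤ k}`. As `i ↦ ⌊ω_i/a₁⌋` is monotone, this count equals `j`
exactly when `⌊ω_{j-1}/a₁⌋ ≤ k < ⌊ω_j/a₁⌋`.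
-/

open Finset

theorem lt_card_filter_le_iff {f : ℕ → ℕ} {n j : ℕ} (hf : MonotoneOn f (Set.Iio n))
    (hj : j < n) (k : ℕ) : j < #{i ∈ range n | f i ≤ k} ↔ f j ≤ k := by
  constructor
  · intro h
    by_contra! hk
    have hsub : {i ∈ range n | f i ≤ k} ⊆ range j := by
      intro i hi
      simp only [mem_filter, mem_range] at hi ⊢
      by_contra! hji
      have := hf (show j ∈ Set.Iio n from hj) (show i ∈ Set.Iio n from hi.1) hji
      omega
    have := card_le_card hsub
    rw [card_range] at this
    omega
  · intro hk
    have hsub : range (j + 1) ⊆ {i ∈ range n | f i ≤ k} := by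
      intro i hi
      simp only [mem_filter, mem_range] at hi ⊢
      exact ⟨by omega, (hf (show i ∈ Set.Iio n by simp; omega) hj (by omega)).trans hk⟩
    simpa using card_le_card hsub

theorem setOf_card_filter_le_eq_succ {f : ℕ → ℕ} {n j : ℕ} (hf : MonotoneOn f (Set.Iio n))
    (hj : j + 1 < n) :
    {k | #{i ∈ range n | f i ≤ k} = j + 1} = Set.Ico (f j) (f (j + 1)) := by
  ext k
  have hlow := lt_card_filter_le_iff hf (by omega : j < n) k
  have hhigh := lt_card_filter_le_iff hf hj k
  simp only [Set.mem_ofPred_eq, Set.mem_Ico]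
  omega

theorem ncard_sep_image_Iio {f : ℕ → ℕ} {n : ℕ} (hf : Set.InjOn f (Set.Iio n))
    (p : ℕ → Prop) [DecidablePred p] :
    {y ∈ f '' Set.Iio n | p y}.ncard = #{i ∈ range n | p (f i)} := by
  have hsep : {y ∈ f '' Set.Iio n | p y} = f '' ↑{i ∈ range n | p (f i)} := by
    ext y
    simp only [coe_filter, Set.mem_image, Set.mem_ofPred_eq, Set.mem_Iio]
    grind
  rw [hsep, (hf.mono (by simp +contextual [Set.subset_def])).ncard_image, Set.ncard_coe_finset]

theorem exists_add_eq_sum_mul {ι : Type*} [Fintype ι] [DecidableEq ι] (a : ι → ℕ)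
    (i₀ : ι) {x : ℕ} (hx : ∃ c : ι → ℕ, x = ∑ i, c i * a i) :
    ∃ c : ι → ℕ, x + a i₀ = ∑ i, c i * a i := by
  obtain ⟨c, rfl⟩ := hx
  refine ⟨c + Pi.single i₀ 1, ?_⟩
  simp [add_mul, sum_add_distrib, Pi.single_apply]

def aperySet (S : Set ℕ) (m : ℕ) : Set ℕ := {w ∈ S | ¬ ∃ s ∈ S, s + m = w}

section AddClosed

variable {S : Set ℕ} {m : ℕ}

theorem add_mul_mem (hS : ∀ s ∈ S, s + m ∈ S) {s : ℕ} (hs : s ∈ S) (t : ℕ) :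
    s + t * m ∈ S := by
  induction t with
  | zero => simpa using hs
  | succ t ih => simpa [add_mul, ← add_assoc] using hS _ ih

theorem mem_of_le_of_modEq (hS : ∀ s ∈ S, s + m ∈ S) {s x : ℕ} (hs : s ∈ S) (hsx : s ≤ x)
    (hmod : x ≡ s [MOD m]) : x ∈ S := by
  obtain ⟨t, ht⟩ := (Nat.modEq_iff_dvd' hsx).mp hmod.symm
  rw [show x = s + t * m by rw [mul_comm] at ht; omega]
  exact add_mul_mem hS hs t

theorem eq_of_modEq_of_mem_aperySet (hS : ∀ s ∈ S, s + m ∈ S) {w w' : ℕ} (hw : w ∈ aperySet S m)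
    (hw' : w' ∈ aperySet S m) (hmod : w ≡ w' [MOD m]) : w = w' := by
  wlog hle : w ≤ w' generalizing w w'
  · exact (this hw' hw hmod.symm (by omega)).symm
  obtain ⟨t, ht⟩ := (Nat.modEq_iff_dvd' hle).mp hmod
  rcases t with _ | u
  · omega
  · refine absurd ⟨w + u * m, add_mul_mem hS hw.1 u, ?_⟩ hw'.2
    rw [mul_comm, add_mul] at ht
    omega

theorem exists_mem_aperySet_le_modEq (hm : 0 < m) {s : ℕ} (hs : s ∈ S) :
    ∃ w ∈ aperySet S m, w ≤ s ∧ s ≡ w [MOD m] := by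
  induction s using Nat.strong_induction_on with
  | _ s ih =>
    by_cases hap : s ∈ aperySet S m
    · exact ⟨s, hap, le_rfl, rfl⟩
    · obtain ⟨s', hs', rfl⟩ : ∃ s' ∈ S, s' + m = s := by
        simpa [aperySet, hs] using hap
      obtain ⟨w, hw, hws, hmod⟩ := ih s' (by omega) hs'
      exact ⟨w, hw, by omega, (Nat.add_mod_right s' m).trans hmod⟩

theorem inter_Ico_eq_image_aperySet (hS : ∀ s ∈ S, s + m ∈ S) (hm : 0 < m) (k : ℕ) :
    Set.Ico (k * m) ((k + 1) * m) ∩ S =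
      (fun w => k * m + w % m) '' {w ∈ aperySet S m | w / m ≤ k} := by
  ext x
  constructor
  · rintro ⟨hx, hxS⟩
    obtain ⟨w, hw, hwx, hmod⟩ := exists_mem_aperySet_le_modEq hm hxS
    have hxk : x / m = k := Nat.div_eq_of_lt_le hx.1 hx.2
    refine ⟨w, ⟨hw, hxk ▸ Nat.div_le_div_right hwx⟩, ?_⟩
    change k * m + w % m = x
    rw [← hmod, ← hxk]
    exact Nat.div_add_mod' x m
  · rintro ⟨w, ⟨hw, hwk⟩, rfl⟩
    dsimp only
    have hwm := Nat.mod_lt w hm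
    have hw_le : w ≤ k * m + w % m := by
      have := Nat.div_add_mod' w m
      have := Nat.mul_le_mul_right m hwk
      omega
    refine ⟨⟨by omega, by rw [add_mul]; omega⟩, mem_of_le_of_modEq hS hw.1 hw_le ?_⟩
    simp [Nat.ModEq, Nat.add_mod]

theorem injOn_add_mod_aperySet (hS : ∀ s ∈ S, s + m ∈ S) (k : ℕ) :
    Set.InjOn (fun w => k * m + w % m) (aperySet S m) :=
  fun _ hw _ hw' h => eq_of_modEq_of_mem_aperySet hS hw hw' (Nat.add_left_cancel h)

theorem ncard_inter_Ico_eq (hS : ∀ s ∈ S, s + m ∈ S) (hm : 0 < m) (k : ℕ) :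
    (Set.Ico (k * m) ((k + 1) * m) ∩ S).ncard = {w ∈ aperySet S m | w / m ≤ k}.ncard := by
  rw [inter_Ico_eq_image_aperySet hS hm,
    ((injOn_add_mod_aperySet hS k).mono (Set.sep_subset _ _)).ncard_image]

end AddClosed

theorem stmt3
    (d : ℕ) (hd : 2 ≤ d)
    (a : Fin d → ℕ)
    (a1 : ℕ) (ha1 : a1 = a ⟨0, by omega⟩)
    (S : Set ℕ)
    (hS : S = {m : ℕ | ∃ c : Fin d → ℕ, m = ∑ i, c i * a i})
    (ω : ℕ → ℕ)
    (hω_mono : ∀ i j : ℕ, i < j → j < a1 → ω i < ω j)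
    (hω_range : ω '' Set.Iio a1 = {w ∈ S | ¬ ∃ s ∈ S, s + a1 = w})
    (I : ℕ → Set ℕ) (hI : ∀ k, I k = Set.Icc (k * a1) ((k + 1) * a1 - 1))
    (η : ℕ → ℕ) (hη : ∀ j, η j = {k : ℕ | (I k ∩ S).ncard = j}.ncard)
    :
    ∀ j : ℕ, 1 ≤ j → j ≤ a1 - 1 →
      (η j : ℤ) = ((ω j / a1 : ℕ) : ℤ) - ((ω (j - 1) / a1 : ℕ) : ℤ) := by
  intro j hj hja
  obtain ⟨j, rfl⟩ : ∃ i, j = i + 1 := ⟨j - 1, by omega⟩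
  have hm : 0 < a1 := by omega
  have hS_add : ∀ s ∈ S, s + a1 ∈ S := by
    subst hS ha1
    exact fun s hs => exists_add_eq_sum_mul a _ hs
  have hω : StrictMonoOn ω (Set.Iio a1) := fun i _ i' hi' hii' => hω_mono i i' hii' hi'
  have hblock (k : ℕ) : (I k ∩ S).ncard = #{i ∈ range a1 | ω i / a1 ≤ k} := by
    rw [hI, Set.Icc_sub_one_right_eq_Ico_of_not_isMin (by simp; positivity),
      ncard_inter_Ico_eq hS_add hm, aperySet, ← hω_range, ncard_sep_image_Iio hω.injOn]
  have hdiv : MonotoneOn (fun i => ω i / a1) (Set.Iio a1) :=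
    fun i hi i' hi' h => Nat.div_le_div_right (hω.monotoneOn hi hi' h)
  rw [hη]
  simp only [hblock]
  rw [setOf_card_filter_le_eq_succ hdiv (by omega), Set.ncard_Ico_nat, Nat.add_sub_cancel,
    Nat.cast_sub (hdiv (by simp; omega) (by simp; omega) (Nat.le_succ j))]
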